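/- Let M ≥ 1 be an integer, let A ∈ ℂ satisfy e^{2πA/M} ≠ 1, and set θ_k := 2πk/M for k = 0,…,M−1. Then for every m ∈ {0,…,M−1}: Σ_{k=0}^{M−1} e^{A(θ_k − θ_m)} · c_{mk} = sinh(πA) · (1 + e^{2πA/M})/(e^{2πA/M} − 1), where c_{mk} := e^{−πA} if k > m, c_{mm} := cosh(πA), and c_{mk} := e^{πA} if k < m. In particular this sum is independent of m, and for the symmetric Alexander angles the matrix sum Σ_k 𝒜_{mk} equals sinh(πA)·coth(πA/M). -/

import Mathlib

/-!
With `q = e^{2πA/M}` and `E = e^{πA}` the `k`-th term is `q^{k-m} c_{mk}`, so the sum is `q^{-m}` times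
a geometric sum split at `k = m` into the pieces weighted by `E`, `cosh(πA)` and `E⁻¹`. Summing the
three geometric progressions and using `q^M = E²`, the dependence on `m` cancels and what remains is
`sinh(πA)(1 + q)/(q - 1)`; with `q = e^{2y}` this is `sinh(πA) coth y` for `y = πA/M`.
-/

open Finset

theorem sum_range_pow_mul_ite_mul_sub_one {R : Type*} [CommRing R] (q a b c : R) {m M : ℕ}
    (hm : m + 1 ≤ M) :
    (∑ k ∈ range M, q ^ k * (if m < k then b else if k = m then c else a)) * (q - 1) =
      a * (q ^ m - 1) + c * q ^ m * (q - 1) + b * (q ^ M - q ^ (m + 1)) := by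
  rw [← sum_range_add_sum_Ico _ hm, sum_range_succ, if_neg (lt_irrefl m), if_pos rfl]
  have hlow : ∑ k ∈ range m, q ^ k * (if m < k then b else if k = m then c else a) =
      (∑ k ∈ range m, q ^ k) * a := by
    rw [sum_mul]
    refine sum_congr rfl fun k hk => ?_
    have hkm : k < m := mem_range.mp hk
    rw [if_neg (by omega), if_neg (by omega)]
  have hhigh : ∑ k ∈ Ico (m + 1) M, q ^ k * (if m < k then b else if k = m then c else a) =
      (∑ k ∈ Ico (m + 1) M, q ^ k) * b := by
    rw [sum_mul]
    refine sum_congr rfl fun k hk => ?_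
    rw [if_pos (Nat.lt_of_succ_le (mem_Ico.mp hk).1)]
  rw [hlow, hhigh]
  linear_combination a * geom_sum_mul q m + b * geom_sum_Ico_mul q hm

theorem sum_fin_pow_mul_ite_mul_sub_one {R : Type*} [CommRing R] (q a b c : R) {M : ℕ}
    (m : Fin M) :
    (∑ k : Fin M, q ^ (k : ℕ) * (if m < k then b else if k = m then c else a)) * (q - 1) =
      a * (q ^ (m : ℕ) - 1) + c * q ^ (m : ℕ) * (q - 1) + b * (q ^ M - q ^ ((m : ℕ) + 1)) := by
  simp only [Fin.lt_def, ← Fin.val_inj]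
  rw [Fin.sum_univ_eq_sum_range (fun k => q ^ k * (if (m : ℕ) < k then b else
    if k = (m : ℕ) then c else a)) M]
  exact sum_range_pow_mul_ite_mul_sub_one q a b c m.isLt

namespace Complex

-- When `sinh y = 0` both sides are `0`, by the convention `x / 0 = 0`.
theorem cosh_div_sinh_eq_one_add_exp_div (y : ℂ) : cosh y / sinh y = (1 + exp (2 * y)) / (exp (2 * y) - 1) := by
  have hE := exp_ne_zero y
  rw [cosh, sinh, exp_neg, div_div_div_cancel_right₀ two_ne_zero, ← mul_div_mul_right _ _ hE,
    add_mul, sub_mul, inv_mul_cancel₀ hE, two_mul, exp_add, add_comm]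

theorem exp_mul_ofReal_angle_sub (A : ℂ) (M k m : ℕ) :
    exp (A * (((2 * Real.pi * k / M : ℝ) : ℂ) - ((2 * Real.pi * m / M : ℝ) : ℂ))) =
      (exp (2 * Real.pi * A / M) ^ m)⁻¹ * exp (2 * Real.pi * A / M) ^ k := by
  rw [← exp_nat_mul, ← exp_nat_mul, ← exp_neg, ← exp_add]
  push_cast
  ring_nf

theorem inv_pow_mul_sum_exp_pow_mul_ite (x y : ℂ) {M : ℕ} (m : Fin M) (hy : exp y ≠ 1)
    (hxy : M * y = 2 * x) :
    (exp y ^ (m : ℕ))⁻¹ *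
        ∑ k : Fin M, exp y ^ (k : ℕ) *
          (if m < k then exp (-x) else if k = m then cosh x else exp x) =
      sinh x * (1 + exp y) / (exp y - 1) := by
  have hq : exp y - 1 ≠ 0 := sub_ne_zero.mpr hy
  have hqM : exp y ^ M = exp x ^ 2 := by rw [← exp_nat_mul, ← exp_nat_mul, hxy]; push_cast; ring_nf
  have hEE : exp x * exp (-x) = 1 := by rw [← exp_add, add_neg_cancel, exp_zero]
  have key := sum_fin_pow_mul_ite_mul_sub_one (exp y) (exp x) (exp (-x)) (cosh x) m
  rw [eq_div_iff hq, mul_assoc, key, hqM, cosh, sinh, pow_succ]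
  field_simp
  linear_combination 2 * exp x * hEE

end Complex

theorem alexander_sum (M : ℕ) (A : ℂ)
    (hA : Complex.exp (2 * (Real.pi : ℂ) * A / (M : ℂ)) ≠ 1) (m : Fin M) :
    (∑ k : Fin M,
        Complex.exp (A * (((2 * Real.pi * (k : ℕ) / M : ℝ) : ℂ) -
            ((2 * Real.pi * (m : ℕ) / M : ℝ) : ℂ))) *
          (if m < k then Complex.exp (-(Real.pi : ℂ) * A)
           else if k = m then Complex.cosh ((Real.pi : ℂ) * A)
           else Complex.exp ((Real.pi : ℂ) * A))) =
      Complex.sinh ((Real.pi : ℂ) * A) *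
        (1 + Complex.exp (2 * (Real.pi : ℂ) * A / (M : ℂ))) /
        (Complex.exp (2 * (Real.pi : ℂ) * A / (M : ℂ)) - 1) ∧
    (∑ k : Fin M,
        Complex.exp (A * (((2 * Real.pi * (k : ℕ) / M : ℝ) : ℂ) -
            ((2 * Real.pi * (m : ℕ) / M : ℝ) : ℂ))) *
          (if m < k then Complex.exp (-(Real.pi : ℂ) * A)
           else if k = m then Complex.cosh ((Real.pi : ℂ) * A)
           else Complex.exp ((Real.pi : ℂ) * A))) =
      Complex.sinh ((Real.pi : ℂ) * A) *
        (Complex.cosh ((Real.pi : ℂ) * A / (M : ℂ)) /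
          Complex.sinh ((Real.pi : ℂ) * A / (M : ℂ))) := by
  have hM : (M : ℂ) ≠ 0 := Nat.cast_ne_zero.mpr (Fin.pos m).ne'
  have hxy : (M : ℂ) * (2 * Real.pi * A / M) = 2 * (Real.pi * A) := by field_simp
  have hsum := Complex.inv_pow_mul_sum_exp_pow_mul_ite _ _ m hA hxy
  rw [mul_sum] at hsum
  simp only [← mul_assoc, ← Complex.exp_mul_ofReal_angle_sub, ← neg_mul] at hsum
  refine ⟨hsum, hsum.trans ?_⟩
  have h2 : 2 * (Real.pi * A / M) = 2 * Real.pi * A / (M : ℂ) := by ring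
  rw [Complex.cosh_div_sinh_eq_one_add_exp_div, h2, mul_div_assoc]
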